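/- arXiv:2109.10530 — 3 statements merged into one kernel-verified Lean document; each statement's English description precedes it below -/
import Mathlib

section
/- Let G be a non-abelian finite nilpotent n-centralizer F-group with |G/Z(G)| = p^k for a prime p and k ≥ 1. Then p divides n−2. -/
/-- The set of element centralizers of a group `G`. -/
def centSet (G : Type*) [Group G] : Set (Subgroup G) :=
  Set.range fun x : G => Subgroup.centralizer {x}

/-- `G` is an F-group if for non-central `x, y`, `C(x) ≤ C(y)` implies `C(x) = C(y)`. -/
def IsFGroup (G : Type*) [Group G] : Prop :=
  ∀ x y : G, x ∉ Subgroup.center G → y ∉ Subgroup.center G →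
    Subgroup.centralizer {x} ≤ Subgroup.centralizer {y} →
    Subgroup.centralizer ({x} : Set G) = Subgroup.centralizer {y}

/-!
The centralizer `C(x)` depends only on the coset `x Z(G)`. In an F-group, for non-central `x`
the elements `y` with `C(y) = C(x)`, together with `Z(G)`, form the subgroup `C(C(x))`, so the
`n - 1` proper centralizers cut `G/Z(G)` minus the identity into the non-identity parts of
nontrivial subgroups. In the `p`-group `G/Z(G)` each of these subgroups has order divisible by
`p`, whence `p^k - 1 ≡ -(n - 1) [MOD p]`.
-/

open Finset Subgroup

theorem ncard_image_compl_one_modEq_one {Q β : Type*} [Group Q] [Finite Q] {p k : ℕ}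
    [Fact p.Prime] (hk : k ≠ 0) (hQ : Nat.card Q = p ^ k) (f : Q → β)
    (hf : ∀ q ≠ 1, ∃ H : Subgroup Q, ∀ r, r ∈ H ↔ r = 1 ∨ f r = f q) :
    (f '' {1}ᶜ).ncard ≡ 1 [MOD p] := by
  classical
  have := Fintype.ofFinite Q
  set s := univ.erase (1 : Q)
  have hfiber : ∀ b ∈ s.image f, p ∣ #{q ∈ s | f q = b} + 1 := by
    intro b hb
    obtain ⟨q, hq, rfl⟩ := mem_image.mp hb
    obtain ⟨H, hH⟩ := hf q (ne_of_mem_erase hq)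
    have hcardH : Nat.card H = #{r ∈ s | f r = f q} + 1 := by
      have : (H : Set Q) = ↑(insert 1 {r ∈ s | f r = f q}) := by
        ext r; by_cases hr : r = 1 <;> simp [s, hH, hr]
      rw [← SetLike.coe_sort_coe, this, Nat.card_coe_set_eq, Set.ncard_coe_finset,
        card_insert_of_notMem (by simp [s])]
    have hqH : q ∈ H := (hH q).mpr (Or.inr rfl)
    have hH1 : Nat.card H ≠ 1 := fun h =>
      ne_of_mem_erase hq (by rwa [Subgroup.card_eq_one.mp h, mem_bot] at hqH)
    rw [← hcardH]
    exact ((IsPGroup.of_card hQ).to_subgroup H).card_eq_or_dvd.resolve_left hH1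
  have hs : (#s : ZMod p) = -1 := by
    rw [card_erase_of_mem (mem_univ _), card_univ, ← Nat.card_eq_fintype_card, hQ,
      Nat.cast_sub (Nat.one_le_pow _ _ (Fact.out : p.Prime).pos)]
    simp [hk]
  have hsum : (#s : ZMod p) + #(s.image f) = 0 := by
    rw [card_eq_sum_card_image f s, ← Nat.cast_add, card_eq_sum_ones (s.image f),
      ← sum_add_distrib, ZMod.natCast_eq_zero_iff]
    exact dvd_sum hfiber
  have himage : f '' {1}ᶜ = ↑(s.image f) := by ext; simp [s]
  rw [himage, Set.ncard_coe_finset, ← ZMod.natCast_eq_natCast_iff, Nat.cast_one]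
  linear_combination hsum - hs

section

variable {G : Type*} [Group G]

theorem Subgroup.centralizer_mul_of_mem_center {x z : G} (hz : z ∈ center G) :
    centralizer {x * z} = centralizer ({x} : Set G) := by
  ext g
  have hgz : Commute g z := mem_center_iff.mp hz g
  rw [mem_centralizer_singleton_iff, mem_centralizer_singleton_iff]
  exact ⟨fun (h : Commute g (x * z)) => by simpa using (h.mul_right hgz.inv_right).eq,
    fun (h : Commute g x) => h.mul_right hgz⟩

theorem Subgroup.centralizer_singleton_eq_top_iff {x : G} :
    centralizer {x} = ⊤ ↔ x ∈ center G := by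
  rw [centralizer_eq_top_iff_subset, Set.singleton_subset_iff, SetLike.mem_coe]

def cosetCentralizer : G ⧸ center G → Subgroup G :=
  Quotient.lift (fun x : G => centralizer {x}) fun a b hab => by
    obtain ⟨z, hz, rfl⟩ : ∃ z ∈ center G, b = a * z :=
      ⟨a⁻¹ * b, QuotientGroup.leftRel_apply.mp hab, by group⟩
    exact (centralizer_mul_of_mem_center hz).symm

theorem cosetCentralizer_mk (x : G) :
    cosetCentralizer (x : G ⧸ center G) = centralizer {x} := rfl

theorem cosetCentralizer_eq_top_iff {q : G ⧸ center G} : cosetCentralizer q = ⊤ ↔ q = 1 := by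
  induction q using QuotientGroup.induction_on with
  | H x => rw [cosetCentralizer_mk, centralizer_singleton_eq_top_iff, QuotientGroup.eq_one_iff]

theorem ncard_centSet [Finite G] :
    (centSet G).ncard = (cosetCentralizer '' {(1 : G ⧸ center G)}ᶜ).ncard + 1 := by
  have hrange : centSet G = insert ⊤ (cosetCentralizer '' {(1 : G ⧸ center G)}ᶜ) := by
    rw [← cosetCentralizer_eq_top_iff.mpr rfl, ← Set.image_insert_eq, Set.compl_eq_univ_sdiff,
      Set.insert_sdiff_singleton, Set.insert_eq_of_mem (Set.mem_univ _), Set.image_univ, centSet,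
      ← QuotientGroup.mk_surjective.range_comp]
    rfl
  rw [hrange, Set.ncard_insert_of_notMem]
  simp [cosetCentralizer_eq_top_iff]

namespace IsFGroup

theorem mem_centralizer_centralizer_iff (hF : IsFGroup G) {x y : G} (hx : x ∉ center G) :
    y ∈ centralizer (centralizer {x} : Set G) ↔
      y ∈ center G ∨ centralizer {y} = centralizer {x} := by
  have hle : y ∈ centralizer (centralizer {x} : Set G) ↔
      centralizer {x} ≤ centralizer {y} := by
    simp only [mem_centralizer_iff, SetLike.le_def, SetLike.mem_coe, Set.mem_singleton_iff,
      forall_eq]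
    exact forall_congr' fun g => imp_congr_right fun _ => eq_comm
  rw [hle]
  by_cases hy : y ∈ center G
  · simp [hy, centralizer_singleton_eq_top_iff.mpr hy]
  · rw [or_iff_right hy]
    exact ⟨fun h => (hF x y hx hy h).symm, fun h => h.ge⟩

theorem exists_subgroup_eq_fiber_cosetCentralizer (hF : IsFGroup G) {q : G ⧸ center G}
    (hq : q ≠ 1) : ∃ H : Subgroup (G ⧸ center G),
      ∀ r, r ∈ H ↔ r = 1 ∨ cosetCentralizer r = cosetCentralizer q := by
  induction q using QuotientGroup.induction_on with
  | H x =>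
  have hx : x ∉ center G := by rwa [Ne, QuotientGroup.eq_one_iff] at hq
  refine ⟨(centralizer (centralizer {x} : Set G)).map (QuotientGroup.mk' _), fun r => ?_⟩
  induction r using QuotientGroup.induction_on with
  | H y =>
  rw [← QuotientGroup.mk'_apply, ← mem_comap, comap_map_eq, QuotientGroup.ker_mk',
    sup_eq_left.mpr (center_le_centralizer _), hF.mem_centralizer_centralizer_iff hx,
    QuotientGroup.mk'_apply, QuotientGroup.eq_one_iff, cosetCentralizer_mk, cosetCentralizer_mk]

end IsFGroup

end

theorem stmt6_general (G : Type*) [Group G] [Finite G]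
    (n p k : ℕ) (hp : p.Prime) (hk : 1 ≤ k)
    (hFgroup : IsFGroup G)
    (hcard : (centSet G).ncard = n)
    (horder : Nat.card (G ⧸ Subgroup.center G) = p ^ k) :
    p ∣ (n - 2) := by
  have : Fact p.Prime := ⟨hp⟩
  have hmod := ncard_image_compl_one_modEq_one (by omega) horder cosetCentralizer
    fun _ hq => hFgroup.exists_subgroup_eq_fiber_cosetCentralizer hq
  rw [← hcard, ncard_centSet, Nat.add_sub_add_right]
  exact Nat.dvd_of_mod_eq_zero (Nat.sub_mod_eq_zero_of_mod_eq hmod)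

/-- For a non-abelian finite nilpotent `n`-centralizer F-group with `|G/Z(G)| = p^k`
(`p` prime, `k ≥ 1`), `p` divides `n - 2`. -/
theorem stmt6 (G : Type*) [Group G] [Finite G] [Group.IsNilpotent G]
    (hG : ¬∀ a b : G, a * b = b * a) (n p k : ℕ) (hp : p.Prime) (hk : 1 ≤ k)
    (hFgroup : IsFGroup G)
    (hcard : (centSet G).ncard = n)
    (horder : Nat.card (G ⧸ Subgroup.center G) = p ^ k) :
    p ∣ (n - 2) :=
  stmt6_general G n p k hp hk hFgroup hcard horder
end

section
/- Let G be a non-abelian n-centralizer group. Then Z(G) has finite index in G and |G/Z(G)| < (n−1)!. -/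
open Subgroup
open scoped Nat Pointwise

universe u

variable {G : Type u} [Group G]

namespace Subgroup

/-- A strict form of B. H. Neumann's lemma: if the equality `∑ 1 / |G : K| = 1` held, the
finite-index members of the cover would be pairwise disjoint, yet they all contain `1`. -/
theorem exists_index_lt_card_of_cover {s : Finset (Subgroup G)}
    (hcover : ⋃ K ∈ s, (K : Set G) = Set.univ) (hproper : ∀ K ∈ s, K ≠ ⊤) :
    ∃ K ∈ s, K.FiniteIndex ∧ K.index < s.card := by
  classical
  have hcover' : ⋃ K ∈ s, (fun _ ↦ (1 : G)) K • ((id K : Subgroup G) : Set G) = Set.univ := by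
    simpa using hcover
  by_contra! hbig
  have hs : 0 < s.card := by
    obtain ⟨K, hK, -⟩ := exists_finiteIndex_of_leftCoset_cover hcover'
    exact Finset.card_pos.2 ⟨K, hK⟩
  have hsum : ∑ K ∈ s, (K.index : ℚ)⁻¹ = 1 := by
    refine le_antisymm ?_ (one_le_sum_inv_index_of_leftCoset_cover hcover')
    calc ∑ K ∈ s, (K.index : ℚ)⁻¹ ≤ ∑ _K ∈ s, (s.card : ℚ)⁻¹ := by
          refine Finset.sum_le_sum fun K hK ↦ ?_
          by_cases hK' : K.FiniteIndex
          · exact inv_anti₀ (by positivity) (by exact_mod_cast hbig K hK hK')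
          · simp [not_finiteIndex_iff.1 hK']
      _ = 1 := by simp [hs.ne']
  have hdisj := pairwiseDisjoint_leftCoset_cover_of_sum_inv_index_eq_one hcover' hsum
  have hmem : ∀ g : G, ∃ K ∈ s.filter FiniteIndex, g ∈ K := by
    simpa [Set.eq_univ_iff_forall] using leftCoset_cover_filter_FiniteIndex hcover'
  obtain ⟨K₁, hK₁, -⟩ := hmem 1
  obtain ⟨w, hw⟩ :=
    SetLike.exists_not_mem_of_ne_top K₁ (hproper K₁ (Finset.mem_filter.1 hK₁).1)
  obtain ⟨K₂, hK₂, hwK₂⟩ := hmem w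
  have hne : K₂ ≠ K₁ := by rintro rfl; exact hw hwK₂
  exact Set.disjoint_left.1 (hdisj hK₂ hK₁ hne) (show (1 : G) ∈ _ by simp) (by simp)

theorem index_le_ncard_of_fibers {α : Type*} {H : Subgroup G} {f : G → α}
    (hf : ∀ a b, f a = f b ↔ a⁻¹ * b ∈ H) {s : Set α} (hs : s.Finite) (hfs : ∀ a, f a ∈ s) :
    H.FiniteIndex ∧ H.index ≤ s.ncard := by
  let F : G ⧸ H → s := Quotient.lift (fun a ↦ ⟨f a, hfs a⟩)
    fun a b hab ↦ Subtype.ext <| (hf a b).2 (QuotientGroup.leftRel_apply.1 hab)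
  have hF : Function.Injective F := by
    refine fun p q ↦ Quotient.inductionOn₂ p q fun a b hab ↦ Quotient.sound ?_
    exact QuotientGroup.leftRel_apply.2 <| (hf a b).1 (congrArg Subtype.val hab)
  have := hs.to_subtype
  have := Finite.of_injective F hF
  exact ⟨finiteIndex_of_finite_quotient,
    (Nat.card_le_card_of_injective F hF).trans_eq (Nat.card_coe_set_eq s)⟩

theorem centralizer_singleton_eq_top_iff_s13 {x : G} : centralizer {x} = ⊤ ↔ x ∈ center G := by
  rw [centralizer_eq_top_iff_subset, Set.singleton_subset_iff, SetLike.mem_coe]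

theorem mem_centralizer_singleton_self (x : G) : x ∈ centralizer {x} :=
  mem_centralizer_singleton_iff.2 rfl

theorem centralizer_centralizer_singleton_le (x : G) :
    centralizer (centralizer {x} : Set G) ≤ centralizer {x} :=
  centralizer_le (Set.singleton_subset_iff.2 (mem_centralizer_singleton_self x))

theorem centralizer_singleton_mul_of_mem_center {a z : G} (hz : z ∈ center G) :
    centralizer {a * z} = centralizer {a} := by
  ext y
  have hyz : Commute y z := mem_center_iff.1 hz y
  simp only [mem_centralizer_singleton_iff]
  change Commute y (a * z) ↔ Commute y a
  exact ⟨fun h ↦ by simpa using h.mul_right hyz.inv_right, fun h ↦ h.mul_right hyz⟩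

theorem centralizer_singleton_subgroupOf (H : Subgroup G) (y : H) :
    centralizer {y} = (centralizer {(y : G)}).subgroupOf H := by
  ext z
  simp [mem_subgroupOf, mem_centralizer_singleton_iff, Subtype.ext_iff]

theorem center_eq_centralizer_subgroupOf (H : Subgroup G) :
    center H = (centralizer (H : Set G)).subgroupOf H := by
  ext z
  simp [mem_subgroupOf, mem_center_iff, mem_centralizer_iff, Subtype.ext_iff, eq_comm]

end Subgroup

theorem centralizer_mem_centSet (x : G) : centralizer {x} ∈ centSet G := ⟨x, rfl⟩

theorem top_mem_centSet : (⊤ : Subgroup G) ∈ centSet G :=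
  ⟨1, centralizer_singleton_eq_top_iff_s13.2 (one_mem _)⟩

theorem centralizer_mem_centSet_diff_top {x : G} (hx : x ∉ center G) :
    centralizer {x} ∈ centSet G \ {⊤} :=
  ⟨centralizer_mem_centSet x, fun h ↦ hx (centralizer_singleton_eq_top_iff_s13.1 h)⟩

theorem centSet_subgroup (H : Subgroup G) :
    centSet H = (·.subgroupOf H) '' Set.range fun y : H ↦ centralizer {(y : G)} := by
  rw [← Set.range_comp]
  exact congrArg Set.range (funext (centralizer_singleton_subgroupOf H))

theorem biUnion_centSet_diff_top (hG : ¬∀ a b : G, a * b = b * a) :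
    ⋃ K ∈ centSet G \ {⊤}, (K : Set G) = Set.univ := by
  push Not at hG
  obtain ⟨a, b, hab⟩ := hG
  have ha : a ∉ center G := fun h ↦ hab (mem_center_iff.1 h b).symm
  refine Set.eq_univ_of_forall fun g ↦ ?_
  by_cases hg : g ∈ center G
  · exact Set.mem_biUnion (centralizer_mem_centSet_diff_top ha) (center_le_centralizer _ hg)
  · exact Set.mem_biUnion (centralizer_mem_centSet_diff_top hg)
      (mem_centralizer_singleton_self g)

theorem exists_maximal_centralizer_index_le (hG : ¬∀ a b : G, a * b = b * a)
    (hfin : (centSet G).Finite) :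
    ∃ x : G, Maximal (· ∈ centSet G \ {⊤}) (centralizer {x}) ∧
      (centralizer {x}).FiniteIndex ∧ (centralizer {x}).index ≤ (centSet G).ncard - 2 := by
  have hfin' : (centSet G \ {⊤}).Finite := hfin.sdiff
  obtain ⟨M₀, hM₀, hfi₀, hidx₀⟩ := exists_index_lt_card_of_cover (s := hfin'.toFinset)
    (by simpa using biUnion_centSet_diff_top hG) fun K hK ↦ (hfin'.mem_toFinset.1 hK).2
  rw [hfin'.mem_toFinset] at hM₀
  rw [← Set.ncard_eq_toFinset_card _ hfin', Set.ncard_sdiff_singleton_of_mem top_mem_centSet]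
    at hidx₀
  obtain ⟨M, hM₀M, hmax⟩ := hfin'.exists_le_maximal hM₀
  obtain ⟨x, rfl⟩ := hmax.prop.1
  beta_reduce at hM₀M hmax
  have hdvd := Nat.le_of_dvd (Nat.pos_of_ne_zero hfi₀.index_ne_zero) (index_dvd_of_le hM₀M)
  exact ⟨x, hmax, finiteIndex_of_le hM₀M, by omega⟩

section

variable {x g v w : G}

theorem centralizer_eq_of_maximal (hmax : Maximal (· ∈ centSet G \ {⊤}) (centralizer {x}))
    (hv : v ∈ centralizer (centralizer {x} : Set G)) (hvZ : v ∉ center G) :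
    centralizer {v} = centralizer {x} :=
  hmax.eq_of_ge (centralizer_mem_centSet_diff_top hvZ)
    fun _ hm ↦ mem_centralizer_singleton_iff.2 (mem_centralizer_iff.1 hv _ hm)

theorem not_le_centralizer_mul (hv : v ∈ centralizer {x}) (hg : g ∉ centralizer {x}) :
    ¬centralizer {x} ≤ centralizer {v * g} := fun hle ↦
  (mul_mem_cancel_left hv).not.2 hg <| centralizer_centralizer_singleton_le x <|
    mem_centralizer_iff.2 fun _ hm ↦ mem_centralizer_singleton_iff.1 (hle hm)

/-- If `w v⁻¹ ∉ Z(G)`, maximality forces `C(w v⁻¹) = C(x)`, and `C(v g) = C(w g) ≤ C(w v⁻¹)`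
would put `v g` in `C(x)`. -/
theorem centralizer_mul_eq_iff (hmax : Maximal (· ∈ centSet G \ {⊤}) (centralizer {x}))
    (hg : g ∉ centralizer {x}) (hv : v ∈ centralizer (centralizer {x} : Set G))
    (hw : w ∈ centralizer (centralizer {x} : Set G)) :
    centralizer {v * g} = centralizer {w * g} ↔ v⁻¹ * w ∈ center G := by
  constructor
  · intro h
    rw [Normal.mem_comm_iff inferInstance]
    by_contra hZ
    have hle : centralizer {v * g} ≤ centralizer {w * v⁻¹} := fun y hy ↦ by
      have hv' : Commute y (v * g) := mem_centralizer_singleton_iff.1 hy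
      have hw' : Commute y (w * g) := mem_centralizer_singleton_iff.1 (h ▸ hy)
      have hwv : Commute y (w * v⁻¹) := by simpa [mul_assoc] using hw'.mul_right hv'.inv_right
      exact mem_centralizer_singleton_iff.2 hwv
    rw [centralizer_eq_of_maximal hmax (mul_mem hw (inv_mem hv)) hZ] at hle
    exact (mul_mem_cancel_left (centralizer_centralizer_singleton_le x hv)).not.2 hg
      (hle (mem_centralizer_singleton_self _))
  · intro h
    have hwg : w * g = v * g * (v⁻¹ * w) := by
      rw [mul_assoc, mem_center_iff.1 h g]
      group
    rw [hwg, centralizer_singleton_mul_of_mem_center h]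

theorem relIndex_center_centralizer_le
    (hmax : Maximal (· ∈ centSet G \ {⊤}) (centralizer {x})) (hg : g ∉ centralizer {x})
    (hfin : (centSet G).Finite) :
    (center G).relIndex (centralizer (centralizer {x} : Set G)) ≠ 0 ∧
      (center G).relIndex (centralizer (centralizer {x} : Set G)) ≤ (centSet G).ncard - 2 := by
  have hcard : (centSet G \ {⊤, centralizer {x}}).ncard = (centSet G).ncard - 2 := by
    rw [Set.ncard_sdiff (Set.insert_subset top_mem_centSet
      (Set.singleton_subset_iff.2 (centralizer_mem_centSet x))),
      Set.ncard_pair (show centralizer {x} ≠ ⊤ from hmax.prop.2).symm]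
  obtain ⟨hfi, hle⟩ := index_le_ncard_of_fibers
    (H := (center G).subgroupOf (centralizer (centralizer {x} : Set G)))
    (f := fun v ↦ centralizer {(v : G) * g}) (s := centSet G \ {⊤, centralizer {x}})
    (fun v w ↦ by simp [centralizer_mul_eq_iff hmax hg v.2 w.2, mem_subgroupOf]) hfin.sdiff
    fun v ↦ ⟨centralizer_mem_centSet _, fun h ↦ not_le_centralizer_mul
      (centralizer_centralizer_singleton_le x v.2) hg (by
        simp only [Set.mem_insert_iff, Set.mem_singleton_iff] at h
        rcases h with h | h <;> simp [h])⟩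
  exact ⟨hfi.index_ne_zero, hcard ▸ hle⟩

theorem centralizer_mul_ne_centralizer (hg : g ∉ centralizer {x}) {y : G}
    (hy : y ∈ centralizer {x}) : centralizer {x * g} ≠ centralizer {y} := by
  intro h
  have hxy : x ∈ centralizer {y} :=
    mem_centralizer_singleton_iff.2 (mem_centralizer_singleton_iff.1 hy).symm
  have hg' : g ∈ centralizer {x * g} := by
    have hxg : x * g ∈ centralizer {y} := h ▸ mem_centralizer_singleton_self (x * g)
    exact h ▸ (mul_mem_cancel_left hxy).1 hxg
  exact hg (mem_centralizer_singleton_iff.2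
    (mul_right_cancel ((mul_assoc g x g).trans (mem_centralizer_singleton_iff.1 hg'))))

/-- The centralizers in `C(x)` are the traces of the `C(y)`, `y ∈ C(x)`; those of `C(1) = G`
and `C(x)` coincide, and `C(x g)` is not among the `C(y)`. -/
theorem ncard_centSet_centralizer_le (hg : g ∉ centralizer {x}) (hfin : (centSet G).Finite) :
    (centSet (centralizer {x})).Finite ∧
      (centSet (centralizer {x})).ncard ≤ (centSet G).ncard - 2 := by
  set A := Set.range fun y : centralizer {x} ↦ centralizer {(y : G)}
  have hA : A ⊆ centSet G \ {centralizer {x * g}} := by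
    rintro _ ⟨y, rfl⟩
    exact ⟨centralizer_mem_centSet _, fun h ↦ centralizer_mul_ne_centralizer hg y.2 h.symm⟩
  have htop : ⊤ ∈ A := ⟨1, centralizer_singleton_eq_top_iff_s13.2 (one_mem _)⟩
  have hx : centralizer {x} ∈ A \ {⊤} :=
    ⟨⟨⟨x, mem_centralizer_singleton_self x⟩, rfl⟩,
      fun h ↦ hg (Set.mem_singleton_iff.1 h ▸ mem_top g)⟩
  have himage : centSet (centralizer {x}) = (·.subgroupOf (centralizer {x})) '' (A \ {⊤}) := by
    rw [centSet_subgroup]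
    change _ '' A = _
    conv_lhs => rw [← Set.insert_sdiff_self_of_mem htop]
    rw [Set.image_insert_eq, top_subgroupOf]
    exact Set.insert_eq_of_mem ⟨_, hx, subgroupOf_self _⟩
  have hAfin : A.Finite := hfin.sdiff.subset hA
  have hAcard : A.ncard ≤ (centSet G).ncard - 1 :=
    (Set.ncard_le_ncard hA hfin.sdiff).trans_eq
      (Set.ncard_sdiff_singleton_of_mem (centralizer_mem_centSet _))
  refine ⟨himage ▸ hAfin.sdiff.image _, himage ▸ (Set.ncard_image_le hAfin.sdiff).trans ?_⟩
  rw [Set.ncard_sdiff_singleton_of_mem htop]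
  omega

end

theorem mul_mul_lt_factorial {n r a c : ℕ} (hn : 3 ≤ n) (hr : r ≤ n - 2) (ha : a ≤ (n - 3)!)
    (hc : c ≤ n - 2) : r * (a * c) < (n - 1)! := by
  obtain ⟨k, rfl⟩ : ∃ k, n = k + 3 := ⟨n - 3, by omega⟩
  simp only [Nat.add_sub_cancel, show k + 3 - 2 = k + 1 by omega,
    show k + 3 - 1 = k + 2 by omega] at *
  calc r * (a * c) ≤ (k + 1) * (k ! * (k + 1)) := by gcongr
    _ < (k + 2) * ((k + 1) * k !) := by nlinarith [k.factorial_pos]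
    _ = (k + 2)! := by simp [Nat.factorial_succ]

theorem relIndex_centralizer_le_factorial {n : ℕ} {x g : G} (hg : g ∉ centralizer {x})
    (hfin : (centSet G).Finite) (hcard : (centSet G).ncard = n)
    (ih : ∀ m < n, ∀ (H : Type u) [Group H], (¬∀ a b : H, a * b = b * a) →
      (centSet H).Finite → (centSet H).ncard = m →
      (center H).index ≠ 0 ∧ (center H).index < (m - 1)!) :
    (centralizer (centralizer {x} : Set G)).relIndex (centralizer {x}) ≠ 0 ∧
      (centralizer (centralizer {x} : Set G)).relIndex (centralizer {x}) ≤ (n - 3)! := by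
  obtain ⟨hfinM, hcardM⟩ := ncard_centSet_centralizer_le hg hfin
  by_cases hcomm : ∀ a b : centralizer {x}, a * b = b * a
  · have hone : (centralizer (centralizer {x} : Set G)).relIndex (centralizer {x}) = 1 :=
      relIndex_eq_one.2 fun a ha ↦ mem_centralizer_iff.2 fun b hb ↦
        congrArg Subtype.val (hcomm ⟨b, hb⟩ ⟨a, ha⟩)
    exact hone ▸ ⟨one_ne_zero, Nat.one_le_iff_ne_zero.2 (Nat.factorial_ne_zero _)⟩
  · have hpos : 0 < (centSet (centralizer {x})).ncard :=
      (Set.ncard_pos hfinM).2 ⟨⊤, top_mem_centSet⟩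
    obtain ⟨hne, hlt⟩ := ih _ (by omega) _ hcomm hfinM rfl
    rw [center_eq_centralizer_subgroupOf] at hne hlt
    exact ⟨hne, hlt.le.trans (Nat.factorial_le (by omega))⟩

theorem index_center_ne_zero_and_lt_factorial (n : ℕ) : ∀ (G : Type u) [Group G],
    (¬∀ a b : G, a * b = b * a) → (centSet G).Finite → (centSet G).ncard = n →
    (center G).index ≠ 0 ∧ (center G).index < (n - 1)! := by
  induction n using Nat.strong_induction_on with
  | _ n ih =>
  intro G _ hG hfin hcard
  obtain ⟨x, hmax, hfi, hidx⟩ := exists_maximal_centralizer_index_le hG hfin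
  have hx : centralizer {x} ≠ ⊤ := hmax.prop.2
  obtain ⟨g, hg⟩ := SetLike.exists_not_mem_of_ne_top _ hx
  obtain ⟨hr0, hr⟩ := relIndex_center_centralizer_le hmax hg hfin
  obtain ⟨ha0, ha⟩ := relIndex_centralizer_le_factorial hg hfin hcard ih
  have hidx2 : 1 < (centralizer {x}).index := one_lt_index_of_ne_top hx
  rw [← relIndex_mul_index (center_le_centralizer _),
    ← relIndex_mul_index (centralizer_centralizer_singleton_le x)]
  exact ⟨mul_ne_zero hr0 (mul_ne_zero ha0 hfi.index_ne_zero),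
    mul_mul_lt_factorial (by omega) (hcard ▸ hr) ha (hcard ▸ hidx)⟩

/-- A non-abelian `n`-centralizer group satisfies `|G/Z(G)| < (n-1)!`. -/
theorem stmt13 (G : Type*) [Group G] (hG : ¬∀ a b : G, a * b = b * a) (n : ℕ)
    (hfin : (centSet G).Finite) (hcard : (centSet G).ncard = n) :
    (Subgroup.center G).FiniteIndex ∧
      Nat.card (G ⧸ Subgroup.center G) < (n - 1).factorial :=
  have h := index_center_ne_zero_and_lt_factorial n G hG hfin hcard
  ⟨⟨h.1⟩, h.2⟩
end

section
/- Let G be a non-abelian finite group with non-trivial center Z(G). Then |Cent(G)| ≤ |G|/2, with equality if and only if G is an extraspecial 2-group. -/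
def IsExtraspecial (p : ℕ) (G : Type*) [Group G] : Prop :=
  Finite G ∧ IsPGroup p G ∧ commutator G = Subgroup.center G ∧
    Nat.card (Subgroup.center G) = p

theorem Set.ncard_range_eq_iff_injective {α β : Type*} [Finite α] (f : α → β) :
    (Set.range f).ncard = Nat.card α ↔ Function.Injective f := by
  refine ⟨fun h => ?_, Set.ncard_range_of_injective⟩
  have hbij := Set.rangeFactorization_surjective.bijective_of_nat_card_le
    (f := Set.rangeFactorization f) (by rw [Nat.card_coe_set_eq, h])
  exact fun a b hab => hbij.injective (Subtype.ext hab)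

open Subgroup
open scoped commutatorElement

section

variable {G : Type*} [Group G]

theorem Subgroup.eq_of_ne_one_of_card_eq_two {H : Subgroup G} (hH : Nat.card H = 2) {a b : G}
    (ha : a ∈ H) (hb : b ∈ H) (ha1 : a ≠ 1) (hb1 : b ≠ 1) : a = b := by
  obtain ⟨c, -, hc⟩ := (Nat.card_eq_two_iff' (1 : H)).mp hH
  have hac : (⟨a, ha⟩ : H) = c := hc _ (by simpa using ha1)
  have hbc : (⟨b, hb⟩ : H) = c := hc _ (by simpa using hb1)
  exact congrArg Subtype.val (hac.trans hbc.symm)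

theorem IsPGroup.of_card_eq_of_pow_mem {p : ℕ} {H : Subgroup G} (hH : Nat.card H = p)
    (hpow : ∀ g : G, g ^ p ∈ H) : IsPGroup p G := fun g => by
  refine ⟨2, ?_⟩
  have h : (⟨g ^ p, hpow g⟩ : H) ^ Nat.card H = 1 := pow_card_eq_one'
  rw [hH] at h
  rw [pow_two, pow_mul]
  exact congrArg Subtype.val h

theorem commutator_le_of_forall_sq_mem {N : Subgroup G} [N.Normal] (hsq : ∀ g : G, g ^ 2 ∈ N) :
    commutator G ≤ N := by
  have hcomm : ∀ a b : G ⧸ N, Commute a b := Commute.of_orderOf_dvd_two fun a => by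
    induction a using QuotientGroup.induction_on with
    | H g =>
      rw [orderOf_dvd_iff_pow_eq_one, ← QuotientGroup.mk_pow, QuotientGroup.eq_one_iff]
      exact hsq g
  exact Normal.quotient_commutative_iff_commutator_le.mp ⟨⟨fun a b => hcomm a b⟩⟩

theorem commutator_ne_bot_of_not_commutative (hG : ¬∀ a b : G, a * b = b * a) :
    commutator G ≠ ⊥ := by
  rw [Ne, commutator_eq_bot_iff_center_eq_top, eq_top_iff']
  exact fun h => hG fun a b => mem_center_iff.mp (h b) a

theorem commute_inv_mul_of_commutatorElement_eq {g x y : G} (h : ⁅g, x⁆ = ⁅g, y⁆) :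
    Commute g (x⁻¹ * y) := by
  rw [commutatorElement_def, commutatorElement_def] at h
  have hconj : x * g * x⁻¹ = y * g * y⁻¹ :=
    calc x * g * x⁻¹ = (g⁻¹ * (g * x * g⁻¹ * x⁻¹))⁻¹ := by group
      _ = (g⁻¹ * (g * y * g⁻¹ * y⁻¹))⁻¹ := by rw [h]
      _ = y * g * y⁻¹ := by group
  calc g * (x⁻¹ * y) = x⁻¹ * (x * g * x⁻¹) * y := by group
    _ = x⁻¹ * (y * g * y⁻¹) * y := by rw [hconj]
    _ = x⁻¹ * y * g := by group

theorem centralizer_singleton_eq_of_inv_mul_mem_center {x y : G} (h : x⁻¹ * y ∈ center G) :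
    centralizer ({x} : Set G) = centralizer {y} := by
  have hc : ∀ g : G, Commute g (x⁻¹ * y) := fun g => mem_center_iff.mp h g
  ext g
  simp only [mem_centralizer_singleton_iff, ← commute_iff_eq]
  constructor
  · intro hg
    simpa using Commute.mul_right hg (hc g)
  · intro hg
    simpa using Commute.mul_right hg (hc g).inv_right

theorem centralizer_singleton_inv (x : G) : centralizer ({x⁻¹} : Set G) = centralizer {x} := by
  ext g
  simp only [mem_centralizer_singleton_iff, ← commute_iff_eq, Commute.inv_right_iff]

theorem inv_mul_mem_center_of_centralizer_eq (hG' : Nat.card (commutator G) = 2) {x y : G}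
    (hxy : centralizer ({x} : Set G) = centralizer {y}) : x⁻¹ * y ∈ center G := by
  refine mem_center_iff.mpr fun g => ?_
  by_cases hg : g ∈ centralizer ({x} : Set G)
  · have hgx : Commute g x := mem_centralizer_singleton_iff.mp hg
    have hgy : Commute g y := mem_centralizer_singleton_iff.mp (hxy ▸ hg)
    exact hgx.inv_right.mul_right hgy
  · have hg' : g ∉ centralizer ({y} : Set G) := hxy ▸ hg
    simp only [mem_centralizer_singleton_iff] at hg hg'
    have hmem : ∀ a b : G, ⁅a, b⁆ ∈ commutator G := fun a b =>
      commutator_def G ▸ commutator_mem_commutator (mem_top a) (mem_top b)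
    refine commute_inv_mul_of_commutatorElement_eq
      (eq_of_ne_one_of_card_eq_two hG' (hmem g x) (hmem g y) ?_ ?_)
    · rwa [Ne, commutatorElement_eq_one_iff_mul_comm]
    · rwa [Ne, commutatorElement_eq_one_iff_mul_comm]

end

noncomputable def centralizerModCenter (G : Type*) [Group G] : G ⧸ center G → Subgroup G :=
  Quotient.lift (fun x : G => centralizer ({x} : Set G))
    fun _ _ h => centralizer_singleton_eq_of_inv_mul_mem_center (QuotientGroup.leftRel_apply.mp h)

section

variable {G : Type*} [Group G]

@[simp]
theorem centralizerModCenter_mk (x : G) :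
    centralizerModCenter G (x : G ⧸ center G) = centralizer {x} :=
  rfl

theorem range_centralizerModCenter : Set.range (centralizerModCenter G) = centSet G :=
  (QuotientGroup.mk_surjective.range_comp (centralizerModCenter G)).symm

theorem ncard_centSet_le [Finite G] : (centSet G).ncard ≤ Nat.card (G ⧸ center G) := by
  rw [← range_centralizerModCenter, ← Nat.card_coe_set_eq]
  exact Finite.card_range_le _

theorem ncard_centSet_eq_iff_injective [Finite G] :
    (centSet G).ncard = Nat.card (G ⧸ center G) ↔
      Function.Injective (centralizerModCenter G) := by
  rw [← range_centralizerModCenter, Set.ncard_range_eq_iff_injective]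

theorem sq_mem_center_of_injective (hinj : Function.Injective (centralizerModCenter G)) (x : G) :
    x ^ 2 ∈ center G := by
  have h : ((x⁻¹ : G) : G ⧸ center G) = x :=
    hinj (by rw [centralizerModCenter_mk, centralizerModCenter_mk, centralizer_singleton_inv])
  simpa [pow_two] using QuotientGroup.eq.mp h

theorem injective_centralizerModCenter (hG' : Nat.card (commutator G) = 2) :
    Function.Injective (centralizerModCenter G) := by
  intro a b
  induction a using QuotientGroup.induction_on with | H x =>
  induction b using QuotientGroup.induction_on with | H y =>
  intro hxy
  exact QuotientGroup.eq.mpr (inv_mul_mem_center_of_centralizer_eq hG' hxy)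

theorem isExtraspecial_two_iff [Finite G] (hG : ¬∀ a b : G, a * b = b * a) :
    IsExtraspecial 2 G ↔
      Nat.card (center G) = 2 ∧ Function.Injective (centralizerModCenter G) := by
  constructor
  · rintro ⟨-, -, hG', hZ⟩
    exact ⟨hZ, injective_centralizerModCenter (hG' ▸ hZ)⟩
  · rintro ⟨hZ, hinj⟩
    have hsq := sq_mem_center_of_injective hinj
    have hle : commutator G ≤ center G := commutator_le_of_forall_sq_mem hsq
    have hG' : commutator G = center G := by
      refine eq_of_le_of_card_ge hle ?_
      have hdvd : Nat.card (commutator G) ∣ 2 := hZ ▸ card_dvd_of_le hle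
      have hlt : 1 < Nat.card (commutator G) :=
        (one_lt_card_iff_ne_bot _).mpr (commutator_ne_bot_of_not_commutative hG)
      have := Nat.le_of_dvd two_pos hdvd
      omega
    exact ⟨inferInstance, IsPGroup.of_card_eq_of_pow_mem hZ hsq, hG', hZ⟩

end

/-- A non-abelian finite group with non-trivial center satisfies `|Cent(G)| ≤ |G|/2`, with
equality iff `G` is an extraspecial `2`-group. -/
theorem stmt16 (G : Type*) [Group G] [Finite G]
    (hG : ¬∀ a b : G, a * b = b * a)
    (hZ : Subgroup.center G ≠ ⊥) :
    ((centSet G).ncard : ℝ) ≤ (Nat.card G : ℝ) / 2 ∧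
      (((centSet G).ncard : ℝ) = (Nat.card G : ℝ) / 2 ↔ IsExtraspecial 2 G) := by
  have hG_card := card_eq_card_quotient_mul_card_subgroup (center G)
  have hZ_card : 2 ≤ Nat.card (center G) := (one_lt_card_iff_ne_bot _).mpr hZ
  have hQ_pos : 0 < Nat.card (G ⧸ center G) := Nat.card_pos
  have hle := ncard_centSet_le (G := G)
  have hbound : 2 * (centSet G).ncard ≤ Nat.card G := by
    rw [hG_card]
    nlinarith
  have hiff : 2 * (centSet G).ncard = Nat.card G ↔ IsExtraspecial 2 G := by
    rw [isExtraspecial_two_iff hG, ← ncard_centSet_eq_iff_injective, hG_card]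
    constructor
    · intro h
      have hZ2 : Nat.card (center G) = 2 := by nlinarith
      exact ⟨hZ2, by rw [hZ2] at h; omega⟩
    · rintro ⟨hZ2, hc⟩
      rw [hZ2, hc, mul_comm]
  constructor
  · rw [le_div_iff₀ two_pos]
    exact_mod_cast (mul_comm _ 2).trans_le hbound
  · rw [eq_div_iff two_ne_zero, ← hiff]
    norm_cast
    omega
end
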